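/- Let F be an arbitrary field and n, d positive integers. Let p_1, …, p_n be monic polynomials in F[λ] with p_j dividing p_{j+1} for 1 ≤ j < n. Then there exists a strictly regular n×n matrix polynomial P over F of degree d that is unimodularly equivalent to the diagonal matrix diag(p_1, …, p_n) if and only if Σ_{j=1}^{n} deg p_j = d·n. -/

import Mathlib

open Polynomial

/-- Unimodular equivalence of square matrix polynomials:
`Q = U * P * V` with `U, V` having determinants that are units of `F[λ]`
(i.e. nonzero constants). -/
def UnimodEquiv {F : Type*} [Field F] {n : ℕ}
    (P Q : Matrix (Fin n) (Fin n) F[X]) : Prop :=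
  ∃ U V : Matrix (Fin n) (Fin n) F[X], IsUnit U.det ∧ IsUnit V.det ∧ Q = U * P * V

/-- The coefficient matrix of `λ^d` in the entries of `P`. -/
def leadMat {F : Type*} [Field F] {n : ℕ} (P : Matrix (Fin n) (Fin n) F[X]) (d : ℕ) :
    Matrix (Fin n) (Fin n) F :=
  Matrix.of fun i j => (P i j).coeff d

/-- `P` is a nonzero matrix polynomial of degree `d`:
all entries have degree at most `d` and some entry has degree exactly `d`. -/
def MatDegEq {F : Type*} [Field F] {m n : ℕ} (P : Matrix (Fin m) (Fin n) F[X]) (d : ℕ) : Prop :=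
  (∀ i j, (P i j).degree ≤ (d : WithBot ℕ)) ∧ ∃ i j, (P i j).degree = (d : WithBot ℕ)

/-!
If the leading coefficient matrix of `P` is invertible, the coefficient of `λ^(dn)` in `det P` is
its determinant, so `deg det P = dn`. Unimodular equivalence preserves `deg det`, and
`det (diag p) = ∏ pⱼ`; this gives `∑ deg pⱼ = dn`.

Conversely, suppose we have a unimodular `G` such that the `F`-linear map `f ↦ (G f mod pₘ)ₘ`
from `(F[λ]_{<d})ⁿ` to `⊕ₘ F[λ]/(pₘ)` is injective. Both sides have dimension `dn`, so it is
bijective, and `λ^d` times the `j`-th column of `G` is congruent to `G aⱼ` for some `aⱼ` of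
degree `< d`. Then `P = λ^d I - A`, where `A` has the columns `aⱼ`, has leading coefficient `I`,
and row `m` of `G P` is divisible by `pₘ`, i.e. `G P = diag(p) W`. Comparing the degrees of the
determinants shows that `W` is unimodular.

`G` is built by induction on `n`. If every `deg pₘ ≥ d`, take `G = I`. Otherwise pick
`deg p_C < d < deg p_B`, solve the problem for the `n - 1` polynomials obtained by deleting
`p_C` and replacing `p_B` by `λ^γ p_C`, where `γ = deg p_B - d`, and border the solution with
the row `e_C` and the column `λ^γ e_B`.
-/

open Matrix

section DetDegree

variable {R ι : Type*} [CommRing R] [Fintype ι] [DecidableEq ι]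

theorem natDegree_det_le_of_natDegree_le {P : Matrix ι ι R[X]} {d : ℕ}
    (h : ∀ i j, (P i j).natDegree ≤ d) : P.det.natDegree ≤ d * Fintype.card ι := by
  rw [det_apply]
  refine natDegree_sum_le_of_forall_le _ _ fun σ _ => ?_
  rw [Units.smul_def, zsmul_eq_mul]
  refine natDegree_mul_le.trans ?_
  rw [natDegree_intCast, zero_add]
  refine (natDegree_prod_le _ _).trans ?_
  exact (Finset.sum_le_card_nsmul _ _ d fun i _ => h (σ i) i).trans_eq (by simp [mul_comm])

theorem coeff_det_of_natDegree_le {P : Matrix ι ι R[X]} {d : ℕ}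
    (h : ∀ i j, (P i j).natDegree ≤ d) :
    P.det.coeff (d * Fintype.card ι) = (P.map (coeff · d)).det := by
  simp only [det_apply, finsetSum_coeff, Units.smul_def, zsmul_eq_mul, coeff_intCast_mul,
    map_apply]
  refine Finset.sum_congr rfl fun σ _ => ?_
  rw [mul_comm d, ← Finset.card_univ,
    coeff_prod_of_natDegree_le (s := Finset.univ) (fun i => P (σ i) i) d fun i _ => h (σ i) i]

theorem natDegree_det_of_det_map_coeff_ne_zero {P : Matrix ι ι R[X]} {d : ℕ}
    (h : ∀ i j, (P i j).natDegree ≤ d) (hlead : (P.map (coeff · d)).det ≠ 0) :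
    P.det.natDegree = d * Fintype.card ι :=
  (natDegree_det_le_of_natDegree_le h).antisymm
    (le_natDegree_of_ne_zero (by rwa [coeff_det_of_natDegree_le h]))

end DetDegree

theorem exists_diagonal_mul_eq_of_dvd {R ι : Type*} [Semiring R] [Fintype ι] [DecidableEq ι]
    {q : ι → R} {M : Matrix ι ι R} (h : ∀ m j, q m ∣ M m j) : ∃ W, M = diagonal q * W := by
  choose W hW using h
  exact ⟨of W, by ext m j; simp [diagonal_mul, hW]⟩

section

variable {F : Type*} [Field F]

theorem natDegree_mul_mul_of_isUnit {u p v : F[X]} (hu : IsUnit u) (hv : IsUnit v) :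
    (u * p * v).natDegree = p.natDegree := by
  obtain ⟨a, ha, rfl⟩ := Polynomial.isUnit_iff.1 hu
  obtain ⟨b, hb, rfl⟩ := Polynomial.isUnit_iff.1 hv
  rw [natDegree_mul_C hb.ne_zero, natDegree_C_mul ha.ne_zero]

theorem isUnit_of_mul_eq_mul_of_natDegree_eq {u b a w : F[X]} (hu : IsUnit u) (hb : b ≠ 0)
    (hab : a.natDegree = b.natDegree) (h : u * b = a * w) : IsUnit w := by
  have hw : w ≠ 0 := by rintro rfl; simp [hu.ne_zero, hb] at h
  have ha : a ≠ 0 := by rintro rfl; simp [hu.ne_zero, hb] at h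
  have hdeg := congr_arg natDegree h
  rw [natDegree_mul hu.ne_zero hb, natDegree_eq_zero_of_isUnit hu, natDegree_mul ha hw, hab]
    at hdeg
  rw [isUnit_iff_degree_eq_zero, degree_eq_natDegree hw]
  exact_mod_cast (by omega : w.natDegree = 0)

theorem UnimodEquiv.natDegree_det_eq {n : ℕ} {P Q : Matrix (Fin n) (Fin n) F[X]}
    (h : UnimodEquiv P Q) : Q.det.natDegree = P.det.natDegree := by
  obtain ⟨U, V, hU, hV, rfl⟩ := h
  rw [det_mul, det_mul, natDegree_mul_mul_of_isUnit hU hV]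

theorem sum_natDegree_eq_of_unimodEquiv_diagonal {n d : ℕ} {p : Fin n → F[X]}
    (hp : ∀ j, p j ≠ 0) {P : Matrix (Fin n) (Fin n) F[X]} (hdeg : ∀ i j, (P i j).natDegree ≤ d)
    (hlead : IsUnit (leadMat P d).det) (hP : UnimodEquiv P (diagonal p)) :
    ∑ j, (p j).natDegree = d * n := by
  rw [← natDegree_prod _ _ fun j _ => hp j, ← det_diagonal, hP.natDegree_det_eq,
    natDegree_det_of_det_map_coeff_ne_zero hdeg hlead.ne_zero, Fintype.card_fin]

def IsDegreeLTInjective {ι : Type*} [Fintype ι] (d : ℕ) (q : ι → F[X]) (G : Matrix ι ι F[X]) :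
    Prop :=
  ∀ f : ι → F[X], (∀ t, (f t).degree < d) → (∀ m, q m ∣ (G *ᵥ f) m) → f = 0

theorem isDegreeLTInjective_one {ι : Type*} [Fintype ι] [DecidableEq ι] {d : ℕ} {q : ι → F[X]}
    (hq : ∀ i, q i ≠ 0) (hqd : ∀ i, d ≤ (q i).natDegree) : IsDegreeLTInjective d q 1 := by
  intro f hf hdvd
  funext m
  refine eq_zero_of_dvd_of_degree_lt (by simpa using hdvd m) ((hf m).trans_le ?_)
  rw [degree_eq_natDegree (hq m)]
  exact_mod_cast hqd m

theorem degree_mulVec_lt {ι : Type*} [Fintype ι] {G : Matrix ι ι F[X]} {f : ι → F[X]} {m : ι}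
    {d N : ℕ} (hG : ∀ t, (G m t).natDegree + d ≤ N) (hf : ∀ t, (f t).degree < d) :
    ((G *ᵥ f) m).degree < N := by
  refine (degree_sum_le _ _).trans_lt
    ((Finset.sup_lt_iff (WithBot.bot_lt_coe N)).2 fun t _ => ?_)
  calc (G m t * f t).degree ≤ (G m t).natDegree + (f t).degree :=
        (degree_mul_le _ _).trans (add_le_add_left degree_le_natDegree _)
    _ < (G m t).natDegree + d := WithBot.add_lt_add_left (WithBot.natCast_ne_bot _) (hf t)
    _ ≤ N := by exact_mod_cast hG t

section Border

variable {ι : Type*} [DecidableEq ι] {C B : ι} {γ : ℕ}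

variable (C B γ) in
/-- In block form with respect to `{C} ⊕ {x // x ≠ C}` this is `!![1, 0; X ^ γ • e_B, G']`. -/
noncomputable def border (G' : Matrix {x // x ≠ C} {x // x ≠ C} F[X]) : Matrix ι ι F[X] :=
  of fun m t =>
    if hm : m = C then if t = C then 1 else 0
    else if ht : t = C then if m = B then X ^ γ else 0
    else G' ⟨m, hm⟩ ⟨t, ht⟩

variable (G' : Matrix {x // x ≠ C} {x // x ≠ C} F[X])

theorem natDegree_border_le {d : ℕ} {q : ι → F[X]} (hCd : (q C).natDegree < d)
    (hB : (q B).natDegree = γ + d)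
    (hG' : ∀ m t, (G' m t).natDegree + d ≤
      max (Function.update q B (X ^ γ * q C) m).natDegree d) (m t : ι) :
    (border C B γ G' m t).natDegree + d ≤ max (q m).natDegree d := by
  by_cases hm : m = C
  · by_cases ht : t = C <;> simp [border, hm, ht]
  by_cases ht : t = C
  · by_cases hmB : m = B
    · subst hmB
      simp [border, hm, ht, hB]
    · simp [border, hm, ht, hmB]
  rw [border, of_apply, dif_neg hm, dif_neg ht]
  refine (hG' ⟨m, hm⟩ ⟨t, ht⟩).trans (max_le ?_ (le_max_right _ _))
  by_cases hmB : m = B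
  · subst hmB
    have := natDegree_mul_le (p := X ^ γ) (q := q C)
    simp only [Function.update_self, natDegree_X_pow] at this ⊢
    omega
  · simp [Function.update_of_ne hmB]

variable [Fintype ι]

theorem det_border : (border C B γ G').det = G'.det := by
  let e := Equiv.sumCompl (fun x : ι => x = C)
  have hblocks : (border C B γ G').submatrix e e = fromBlocks 1 0
      (of fun (m : {x // x ≠ C}) (_ : {x // x = C}) => if (m : ι) = B then X ^ γ else 0) G' := by
    ext (i | i) (j | j)
    · simp [e, border, j.2, Subsingleton.elim i j]
    all_goals simp [e, border, i.2, j.2]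
  rw [← det_submatrix_equiv_self e, hblocks, det_fromBlocks_zero₁₂, det_one, one_mul]

theorem border_mulVec_self (f : ι → F[X]) : (border C B γ G' *ᵥ f) C = f C := by
  simp [border, mulVec, dotProduct]

theorem border_mulVec_of_ne (f : ι → F[X]) {m : ι} (hm : m ≠ C) :
    (border C B γ G' *ᵥ f) m =
      (G' *ᵥ fun t => f t) ⟨m, hm⟩ + if m = B then X ^ γ * f C else 0 := by
  simp only [mulVec, dotProduct, Fintype.sum_eq_add_sum_subtype_ne _ C]
  simp only [border, of_apply, hm, dite_false, dite_true, ite_mul, zero_mul]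
  rw [add_comm]
  congr 1
  exact Finset.sum_congr rfl fun t _ => by simp [t.2]

theorem isDegreeLTInjective_border {d : ℕ} {q : ι → F[X]} (hBC : B ≠ C) (hqB : q B ≠ 0)
    (hrowB : ∀ t, (border C B γ G' B t).natDegree + d ≤ (q B).natDegree)
    (hG' : IsDegreeLTInjective d
      (fun m : {x // x ≠ C} => Function.update q B (X ^ γ * q C) m) G') :
    IsDegreeLTInjective d q (border C B γ G') := by
  intro f hf hdvd
  obtain ⟨g, hg⟩ : q C ∣ f C := border_mulVec_self G' f ▸ hdvd C
  have hrowB_zero : (border C B γ G' *ᵥ f) B = 0 :=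
    eq_zero_of_dvd_of_degree_lt (hdvd B)
      ((degree_mulVec_lt hrowB hf).trans_eq (degree_eq_natDegree hqB).symm)
  have hrest : (fun t : {x // x ≠ C} => f t) = 0 := by
    refine hG' _ (fun t => hf t) fun ⟨m, hm⟩ => ?_
    by_cases hmB : m = B
    · subst hmB
      have := border_mulVec_of_ne (B := m) (γ := γ) G' f hm
      rw [hrowB_zero, if_pos rfl, hg] at this
      exact ⟨-g, by simp [eq_neg_of_add_eq_zero_left this.symm]; ring⟩
    · simpa [border_mulVec_of_ne (B := B) (γ := γ) G' f hm, hmB] using hdvd m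
  have hfC : f C = 0 := by
    have := border_mulVec_of_ne (B := B) (γ := γ) G' f hBC
    simpa [hrowB_zero, hrest, X_ne_zero] using this
  funext t
  by_cases ht : t = C
  · rw [ht, hfC, Pi.zero_apply]
  · exact congr_fun hrest ⟨t, ht⟩

end Border

theorem sum_natDegree_update_subtype_ne {ι : Type*} [Fintype ι] [DecidableEq ι] {d : ℕ}
    {q : ι → F[X]} {B C : ι} (hC : q C ≠ 0) (hBC : B ≠ C) (hB : d ≤ (q B).natDegree)
    (hsum : ∑ i, (q i).natDegree = d * Fintype.card ι) :
    ∑ m : {x // x ≠ C}, (Function.update q B (X ^ ((q B).natDegree - d) * q C) m).natDegree =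
      d * Fintype.card {x // x ≠ C} := by
  set Q := Function.update q B (X ^ ((q B).natDegree - d) * q C)
  have hQ_of_ne : ∀ i, i ≠ B → Q i = q i := fun i hi => Function.update_of_ne hi _ _
  have hQB : (Q B).natDegree = (q B).natDegree - d + (q C).natDegree := by
    simp [Q, natDegree_mul (pow_ne_zero _ X_ne_zero) hC]
  have hQ : ∑ i, (Q i).natDegree + (q B).natDegree = ∑ i, (q i).natDegree + (Q B).natDegree := by
    rw [Fintype.sum_eq_add_sum_subtype_ne _ B, Fintype.sum_eq_add_sum_subtype_ne _ B,
      Finset.sum_congr rfl fun (i : {i // i ≠ B}) _ => by rw [hQ_of_ne i i.2]]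
    ring
  have hQC := Fintype.sum_eq_add_sum_subtype_ne (fun i => (Q i).natDegree) C
  rw [hQ_of_ne C hBC.symm] at hQC
  have hcard : d * Fintype.card {x // x ≠ C} + d = d * Fintype.card ι := by
    rw [Fintype.card_subtype_compl, Fintype.card_subtype_eq,
      ← Nat.sub_add_cancel (Fintype.card_pos_iff.2 ⟨C⟩)]
    simp [mul_add]
  omega

/-- The degree bound is carried along for the induction: in the bordered matrix it forces row `B`
to vanish on vectors of degree `< d`. -/
theorem exists_isUnit_det_isDegreeLTInjective {ι : Type*} [Fintype ι] [DecidableEq ι] {d : ℕ}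
    (q : ι → F[X]) (hq : ∀ i, q i ≠ 0) (hsum : ∑ i, (q i).natDegree = d * Fintype.card ι) :
    ∃ G : Matrix ι ι F[X], IsUnit G.det ∧
      (∀ m t, (G m t).natDegree + d ≤ max (q m).natDegree d) ∧ IsDegreeLTInjective d q G := by
  induction hn : Fintype.card ι using Nat.strong_induction_on generalizing ι with
  | _ n ih =>
  by_cases hshort : ∃ C, (q C).natDegree < d
  swap
  · push Not at hshort
    refine ⟨1, by simp, fun m t => ?_, isDegreeLTInjective_one hq hshort⟩
    by_cases hmt : m = t <;> simp [one_apply, hmt]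
  obtain ⟨C, hC⟩ := hshort
  obtain ⟨B, hB⟩ : ∃ B, d < (q B).natDegree := by
    by_contra! hall
    have := Finset.sum_lt_sum (fun i _ => hall i) ⟨C, Finset.mem_univ C, hC⟩
    simp [hsum, hn, mul_comm] at this
  have hBC : B ≠ C := by rintro rfl; omega
  set γ := (q B).natDegree - d
  set Q := Function.update q B (X ^ γ * q C)
  have hQ_ne_zero : ∀ i, Q i ≠ 0 := by
    intro i
    by_cases hiB : i = B
    · simp [Q, hiB, hq C]
    · simp [Q, Function.update_of_ne hiB, hq]
  have hcard : Fintype.card {x // x ≠ C} < n := by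
    rw [← hn, Fintype.card_subtype_compl, Fintype.card_subtype_eq]
    exact Nat.sub_lt (Fintype.card_pos_iff.2 ⟨C⟩) one_pos
  obtain ⟨G', hG'det, hG'deg, hG'inj⟩ := ih _ hcard (fun m : {x // x ≠ C} => Q m)
    (fun m => hQ_ne_zero m) (sum_natDegree_update_subtype_ne (hq C) hBC hB.le hsum) rfl
  have hdeg := natDegree_border_le G' hC (by omega) hG'deg
  exact ⟨border C B γ G', (det_border G').symm ▸ hG'det, hdeg, isDegreeLTInjective_border G' hBC
    (hq B) (fun t => (hdeg B t).trans (max_le le_rfl hB.le)) hG'inj⟩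

theorem finrank_degreeLT (d : ℕ) : Module.finrank F (degreeLT F d) = d := by
  simp [Module.finrank_eq_card_basis (degreeLT.basis F d)]

theorem exists_degreeLT_dvd_mulVec_sub {ι : Type*} [Fintype ι] {d : ℕ} {q : ι → F[X]}
    {G : Matrix ι ι F[X]} (hq : ∀ i, q i ≠ 0) (hsum : ∑ i, (q i).natDegree = d * Fintype.card ι)
    (hG : IsDegreeLTInjective d q G) (v : ι → F[X]) :
    ∃ f : ι → F[X], (∀ t, (f t).degree < d) ∧ ∀ m, q m ∣ (G *ᵥ f) m - v m := by
  have := fun m => (AdjoinRoot.powerBasis (hq m)).finite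
  let Φ : (ι → degreeLT F d) →ₗ[F] ((m : ι) → AdjoinRoot (q m)) :=
    LinearMap.pi fun m => (AdjoinRoot.mkₐ (q m)).toLinearMap ∘ₗ LinearMap.proj m ∘ₗ
      (G.mulVecLin.restrictScalars F) ∘ₗ LinearMap.piMap fun _ => (degreeLT F d).subtype
  have hΦ : ∀ f m, Φ f m = AdjoinRoot.mk (q m) ((G *ᵥ fun t => (f t : F[X])) m) :=
    fun _ _ => rfl
  have hinj : Function.Injective Φ := by
    rw [← LinearMap.ker_eq_bot, LinearMap.ker_eq_bot']
    intro f hf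
    have := hG _ (fun t => mem_degreeLT.1 (f t).2) fun m => by
      rw [← AdjoinRoot.mk_eq_zero, ← hΦ, hf, Pi.zero_apply]
    funext t
    exact Subtype.ext (congr_fun this t)
  have hrank : Module.finrank F (ι → degreeLT F d) =
      Module.finrank F ((m : ι) → AdjoinRoot (q m)) := by
    simp [Module.finrank_pi_fintype, finrank_degreeLT, (AdjoinRoot.powerBasis (hq _)).finrank,
      hsum, mul_comm]
  obtain ⟨f, hf⟩ := (LinearMap.injective_iff_surjective_of_finrank_eq_finrank hrank).1 hinj
    fun m => AdjoinRoot.mk (q m) (v m)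
  exact ⟨fun t => f t, fun t => mem_degreeLT.1 (f t).2,
    fun m => AdjoinRoot.mk_eq_mk.1 ((hΦ f m).symm.trans (congr_fun hf m))⟩

theorem exists_unimodEquiv_diagonal_of_sum_natDegree {n d : ℕ} {p : Fin n → F[X]}
    (hp : ∀ j, p j ≠ 0) (hsum : ∑ j, (p j).natDegree = d * n) :
    ∃ P : Matrix (Fin n) (Fin n) F[X],
      (∀ i j, (P i j).natDegree ≤ d) ∧ leadMat P d = 1 ∧ UnimodEquiv P (diagonal p) := by
  replace hsum : ∑ j, (p j).natDegree = d * Fintype.card (Fin n) := by rw [hsum, Fintype.card_fin]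
  obtain ⟨G, hGdet, -, hG⟩ := exists_isUnit_det_isDegreeLTInjective p hp hsum
  choose a ha_deg ha_dvd using fun j =>
    exists_degreeLT_dvd_mulVec_sub hp hsum hG fun m => G m j * X ^ d
  let P : Matrix (Fin n) (Fin n) F[X] := diagonal (fun _ => X ^ d) - of fun t j => a j t
  have hPdeg : ∀ i j, (P i j).natDegree ≤ d := fun i j =>
    (natDegree_sub_le _ _).trans <| max_le (by by_cases h : i = j <;> simp [h])
      (natDegree_le_iff_degree_le.2 (ha_deg j i).le)
  have hlead : leadMat P d = 1 := by
    ext i j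
    have := coeff_eq_zero_of_degree_lt (ha_deg j i)
    by_cases h : i = j
    · subst h
      simp [leadMat, P, this]
    · simp [leadMat, P, h, this]
  obtain ⟨W, hW⟩ : ∃ W, G * P = diagonal p * W := by
    refine exists_diagonal_mul_eq_of_dvd fun m j => ?_
    have : (G * P) m j = -((G *ᵥ a j) m - G m j * X ^ d) := by
      rw [Matrix.mul_sub, Matrix.sub_apply, mul_diagonal, neg_sub]
      rfl
    exact this ▸ (ha_dvd j m).neg_right
  have hWdet : IsUnit W.det := by
    have hlead_det : (P.map (coeff · d)).det = 1 := (congrArg det hlead).trans det_one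
    have hPdet : P.det.natDegree = d * Fintype.card (Fin n) :=
      natDegree_det_of_det_map_coeff_ne_zero hPdeg (by simp [hlead_det])
    refine isUnit_of_mul_eq_mul_of_natDegree_eq (b := P.det) hGdet ?_ ?_
      (by rw [← det_mul, ← det_mul, hW])
    · intro h
      simpa [h, hlead_det] using coeff_det_of_natDegree_le hPdeg
    · rw [det_diagonal, natDegree_prod _ _ fun j _ => hp j, hsum, hPdet]
  exact ⟨P, hPdeg, hlead, G, W⁻¹, hGdet, isUnit_nonsing_inv_det W hWdet,
    by rw [hW, mul_nonsing_inv_cancel_right _ _ hWdet]⟩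

theorem matDegEq_of_leadMat_ne_zero {n d : ℕ} {P : Matrix (Fin n) (Fin n) F[X]}
    (hdeg : ∀ i j, (P i j).natDegree ≤ d) (hlead : leadMat P d ≠ 0) : MatDegEq P d := by
  refine ⟨fun i j => natDegree_le_iff_degree_le.1 (hdeg i j), ?_⟩
  by_contra! h
  exact hlead (ext fun i j => coeff_eq_zero_of_degree_lt
    ((natDegree_le_iff_degree_le.1 (hdeg i j)).lt_of_ne (h i j)))

end

theorem statement_2_general {F : Type*} [Field F] (n d : ℕ) (hn : 0 < n)
    (p : Fin n → F[X]) (hmonic : ∀ j, (p j).Monic) :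
    (∃ P : Matrix (Fin n) (Fin n) F[X],
        MatDegEq P d ∧ IsUnit (leadMat P d).det ∧ UnimodEquiv P (Matrix.diagonal p)) ↔
      ∑ j, (p j).natDegree = d * n := by
  have hp : ∀ j, p j ≠ 0 := fun j => (hmonic j).ne_zero
  constructor
  · rintro ⟨P, ⟨hdeg, -⟩, hlead, hP⟩
    exact sum_natDegree_eq_of_unimodEquiv_diagonal hp
      (fun i j => natDegree_le_iff_degree_le.2 (hdeg i j)) hlead hP
  · intro hsum
    obtain ⟨P, hdeg, hlead, hP⟩ := exists_unimodEquiv_diagonal_of_sum_natDegree hp hsum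
    have : NeZero n := ⟨hn.ne'⟩
    exact ⟨P, matDegEq_of_leadMat_ne_zero hdeg (hlead ▸ one_ne_zero), by simp [hlead], hP⟩

theorem statement_2 {F : Type*} [Field F] (n d : ℕ) (hn : 0 < n) (hd : 0 < d)
    (p : Fin n → F[X]) (hmonic : ∀ j, (p j).Monic)
    (hchain : ∀ (j : Fin n) (h : (j : ℕ) + 1 < n), p j ∣ p ⟨(j : ℕ) + 1, h⟩) :
    (∃ P : Matrix (Fin n) (Fin n) F[X],
        MatDegEq P d ∧ IsUnit (leadMat P d).det ∧ UnimodEquiv P (Matrix.diagonal p)) ↔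
      ∑ j, (p j).natDegree = d * n :=
  statement_2_general n d hn p hmonic
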